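/- For every integer k ≥ 1 and every real polynomial p of degree at most k, ∫_ℝ p'(y)² φ(y) dy ≤ k ∫_ℝ p(y)² φ(y) dy; that is, ‖p'‖_{L²(φ)} ≤ √k · ‖p‖_{L²(φ)}. -/

import Mathlib

open MeasureTheory Real Filter

/-- The standard normal density. -/
noncomputable def gauss (y : ℝ) : ℝ := (Real.sqrt (2 * Real.pi))⁻¹ * Real.exp (-(y ^ 2) / 2)

/-- The Gaussian mixture density `f_G`. -/
noncomputable def mixDens (G : Measure ℝ) (y : ℝ) : ℝ := ∫ u, gauss (y - u) ∂G

/-- The regret `Regret(H‖G)`. -/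
noncomputable def regret (H G : Measure ℝ) : ℝ :=
  ∫ y, (deriv (mixDens G) y / mixDens G y - deriv (mixDens H) y / mixDens H y) ^ 2 * mixDens G y

/-- The squared Hellinger distance between `f_G` and `f_H`. -/
noncomputable def hellingerSq (G H : Measure ℝ) : ℝ :=
  ∫ y, (Real.sqrt (mixDens G y) - Real.sqrt (mixDens H y)) ^ 2


open Polynomial

lemma gauss_nonneg (y : ℝ) : 0 ≤ gauss y := by
  unfold gauss; positivity

lemma integrable_pow_gauss (n : ℕ) : Integrable fun y : ℝ => y ^ n * gauss y := by
  have h := (integrable_rpow_mul_exp_neg_mul_sq (b := (1:ℝ)/2) (by norm_num)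
    (s := (n:ℝ)) (lt_of_lt_of_le neg_one_lt_zero (Nat.cast_nonneg n))).const_mul
    ((Real.sqrt (2 * Real.pi))⁻¹)
  refine h.congr (Filter.Eventually.of_forall fun x => ?_)
  show (Real.sqrt (2 * Real.pi))⁻¹ * (x ^ ((n:ℕ):ℝ) * Real.exp (-(1/2) * x ^ 2))
      = x ^ n * gauss x
  rw [Real.rpow_natCast]
  unfold gauss
  rw [show -(1/2 : ℝ) * x ^ 2 = -(x ^ 2) / 2 by ring]
  ring

lemma integrable_poly_gauss (p : Polynomial ℝ) :
    Integrable fun y : ℝ => p.eval y * gauss y := by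
  have h : (fun y : ℝ => p.eval y * gauss y) =
      fun y => ∑ i ∈ Finset.range (p.natDegree + 1), p.coeff i * (y ^ i * gauss y) := by
    funext y
    rw [Polynomial.eval_eq_sum_range, Finset.sum_mul]
    exact Finset.sum_congr rfl fun i _ => by ring
  rw [h]
  exact integrable_finset_sum _ fun i _ => (integrable_pow_gauss i).const_mul _

noncomputable def Jg (p : Polynomial ℝ) : ℝ := ∫ y, p.eval y * gauss y

lemma Jg_congr {p q : Polynomial ℝ} (h : p = q) : Jg p = Jg q := by rw [h]

lemma Jg_zero : Jg 0 = 0 := by simp [Jg]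

lemma Jg_add (p q : Polynomial ℝ) : Jg (p + q) = Jg p + Jg q := by
  unfold Jg
  simp only [Polynomial.eval_add, add_mul]
  exact integral_add (integrable_poly_gauss p) (integrable_poly_gauss q)

lemma Jg_sub (p q : Polynomial ℝ) : Jg (p - q) = Jg p - Jg q := by
  unfold Jg
  simp only [Polynomial.eval_sub, sub_mul]
  exact integral_sub (integrable_poly_gauss p) (integrable_poly_gauss q)

lemma Jg_smul (a : ℝ) (p : Polynomial ℝ) : Jg (C a * p) = a * Jg p := by
  unfold Jg
  simp only [Polynomial.eval_mul, Polynomial.eval_C, mul_assoc]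
  exact integral_const_mul a _

lemma Jg_sq_nonneg (p : Polynomial ℝ) : 0 ≤ Jg (p ^ 2) :=
  integral_nonneg fun y => mul_nonneg (by simp [Polynomial.eval_pow]; positivity) (gauss_nonneg y)

lemma hasDerivAt_gauss (y : ℝ) : HasDerivAt gauss (-y * gauss y) y := by
  have h : HasDerivAt (fun y : ℝ => -(y ^ 2) / 2) (-y) y := by
    have h2 := ((hasDerivAt_pow 2 y).neg).div_const 2
    refine h2.congr_deriv ?_
    push_cast
    ring
  have h3 := (h.exp).const_mul ((Real.sqrt (2 * Real.pi))⁻¹)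
  unfold gauss
  refine h3.congr_deriv ?_
  ring

lemma Jg_X_mul (p : Polynomial ℝ) : Jg (X * p) = Jg (derivative p) := by
  have hder : ∀ y : ℝ, HasDerivAt (fun y => p.eval y * gauss y)
      ((fun y => (derivative p - X * p).eval y * gauss y) y) y := by
    intro y
    have h2 := (p.hasDerivAt y).mul (hasDerivAt_gauss y)
    refine h2.congr_deriv ?_
    simp only [Polynomial.eval_sub, Polynomial.eval_mul, Polynomial.eval_X]
    ring
  have h0 := integral_eq_zero_of_hasDerivAt_of_integrable hder
    (integrable_poly_gauss _) (integrable_poly_gauss p)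
  have h1 : Jg (derivative p - X * p) = 0 := h0
  rw [Jg_sub] at h1
  linarith

lemma Jg_pair (q r : Polynomial ℝ) :
    Jg ((X * q - derivative q) * r) = Jg (q * derivative r) := by
  have h1 := Jg_X_mul (q * r)
  rw [Polynomial.derivative_mul] at h1
  rw [Jg_congr (show (X * q - derivative q) * r = X * (q * r) - derivative q * r by ring),
    Jg_sub, h1, Jg_add]
  ring

lemma Jg_A_sq (r : Polynomial ℝ) :
    Jg ((X * r - derivative r) ^ 2) = Jg (derivative r ^ 2) + Jg (r ^ 2) := by
  have h2 := Jg_pair r (X * r - derivative r)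
  have h3 : derivative (X * r - derivative r)
      = (X * derivative r - derivative (derivative r)) + r := by
    simp [Polynomial.derivative_mul]; ring
  have h4 := Jg_pair (derivative r) r
  rw [sq, h2, h3]
  rw [Jg_congr (show r * ((X * derivative r - derivative (derivative r)) + r)
        = (X * derivative r - derivative (derivative r)) * r + r * r by ring),
    Jg_add, h4]
  rw [Jg_congr (show derivative r * derivative r = derivative r ^ 2 by ring),
    Jg_congr (show r * r = r ^ 2 by ring)]

lemma decomp : ∀ (n : ℕ) (p : Polynomial ℝ), p.natDegree ≤ n →
    ∃ q c, p = X * q - derivative q + C c ∧ (q = 0 ∨ q.natDegree < p.natDegree) := by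
  intro n
  induction n using Nat.strong_induction_on with
  | _ n IH =>
    intro p hp
    rcases Nat.eq_zero_or_pos p.natDegree with h0 | hpos
    · obtain ⟨a, ha⟩ := Polynomial.natDegree_eq_zero.mp h0
      exact ⟨0, a, by simp [← ha], Or.inl rfl⟩
    · set m := p.natDegree with hm
      set q₀ : Polynomial ℝ := C p.leadingCoeff * X ^ (m - 1) with hq₀
      have hq₀deg : q₀.natDegree ≤ m - 1 := by
        apply le_trans (Polynomial.natDegree_C_mul_le _ _)
        simp
      have hXq₀ : X * q₀ = C p.leadingCoeff * X ^ m := by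
        rw [hq₀]
        rw [show X * (C p.leadingCoeff * X ^ (m-1)) = C p.leadingCoeff * (X^(m-1) * X) by ring,
          ← pow_succ, Nat.sub_add_cancel hpos]
      set r : Polynomial ℝ := p - (X * q₀ - derivative q₀) with hr
      have hrdeg : r.natDegree < m := by
        have h1 : r = p.eraseLead + derivative q₀ := by
          rw [hr, hXq₀, ← Polynomial.self_sub_C_mul_X_pow]
          ring
        rw [h1]
        apply lt_of_le_of_lt (Polynomial.natDegree_add_le _ _)
        apply max_lt
        · exact lt_of_le_of_lt (Polynomial.eraseLead_natDegree_le p) (by omega)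
        · exact lt_of_le_of_lt (Polynomial.natDegree_derivative_le q₀) (by omega)
      have hmn : m ≤ n := hp
      obtain ⟨q₁, c, hq₁, hq₁deg⟩ := IH (m - 1) (by omega) r (by omega)
      refine ⟨q₀ + q₁, c, ?_, Or.inr ?_⟩
      · have : p = (X * q₀ - derivative q₀) + r := by rw [hr]; ring
        rw [this, hq₁, Polynomial.derivative_add]
        ring
      · apply lt_of_le_of_lt (Polynomial.natDegree_add_le _ _)
        apply max_lt
        · omega
        · rcases hq₁deg with h | h
          · simp [h]; omega
          · omega

lemma bernstein_main : ∀ (k : ℕ) (p : Polynomial ℝ), p.natDegree ≤ k →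
    Jg (derivative p ^ 2) ≤ (k : ℝ) * Jg (p ^ 2) := by
  intro k
  induction k using Nat.strong_induction_on with
  | _ k IH =>
    intro p hp
    rcases Nat.eq_zero_or_pos k with rfl | hk
    · obtain ⟨a, ha⟩ := Polynomial.natDegree_eq_zero.mp (Nat.le_zero.mp hp)
      rw [← ha]
      simp [Jg_zero]
    · obtain ⟨q, c, hpq, hdeg⟩ := decomp k p hp
      have hq : q.natDegree ≤ k - 1 := by
        rcases hdeg with h | h
        · simp [h]
        · omega
      -- identity for derivative p
      have e1 : derivative p = (X * derivative q - derivative (derivative q)) + q := by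
        rw [hpq]
        simp [Polynomial.derivative_mul]
        ring
      -- expansion of Jg (derivative p ^ 2)
      have hcross : Jg ((X * derivative q - derivative (derivative q)) * q)
          = Jg (derivative q ^ 2) := by
        rw [Jg_pair, Jg_congr (show derivative q * derivative q = derivative q ^ 2 by ring)]
      have hDP : Jg (derivative p ^ 2)
          = Jg (derivative (derivative q) ^ 2) + 3 * Jg (derivative q ^ 2) + Jg (q ^ 2) := by
        rw [e1]
        rw [Jg_congr (show ((X * derivative q - derivative (derivative q)) + q) ^ 2
            = (X * derivative q - derivative (derivative q)) ^ 2
              + (((X * derivative q - derivative (derivative q)) * q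
              + ((X * derivative q - derivative (derivative q)) * q + q ^ 2))) by ring),
          Jg_add, Jg_add, Jg_add, Jg_A_sq, hcross]
        ring
      -- expansion of Jg (p ^ 2)
      have hcc : Jg ((X * q - derivative q) * C c) = 0 := by
        rw [Jg_pair]
        simp [Jg_zero]
      have hP2 : Jg (p ^ 2) = Jg (derivative q ^ 2) + Jg (q ^ 2) + c ^ 2 * Jg 1 := by
        rw [hpq]
        rw [Jg_congr (show (X * q - derivative q + C c) ^ 2
            = (X * q - derivative q) ^ 2 + (((X * q - derivative q) * C c)
              + (((X * q - derivative q) * C c) + C (c ^ 2) * 1)) by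
            rw [map_pow]; ring),
          Jg_add, Jg_add, Jg_add, Jg_A_sq, hcc, Jg_smul]
        ring
      have hJ1 : 0 ≤ Jg 1 := by
        have := Jg_sq_nonneg (1 : Polynomial ℝ)
        simpa using this
      have ht : 0 ≤ c ^ 2 * Jg 1 := mul_nonneg (sq_nonneg c) hJ1
      rcases Nat.lt_or_ge k 2 with hk1 | hk2
      · -- k = 1
        have hk1' : k = 1 := by omega
        subst hk1'
        have hq0 : q.natDegree = 0 := by omega
        obtain ⟨a, ha⟩ := Polynomial.natDegree_eq_zero.mp hq0
        have hdq : derivative q = 0 := by rw [← ha]; simp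
        rw [hDP, hP2, hdq]
        simp only [Polynomial.derivative_zero, Nat.cast_one, one_mul]
        rw [Jg_congr (show (0 : Polynomial ℝ) ^ 2 = 0 by ring), Jg_zero]
        linarith
      · -- k ≥ 2
        have IH1 := IH (k - 1) (by omega) q hq
        have IH2 := IH (k - 2) (by omega) (derivative q)
          (le_trans (Polynomial.natDegree_derivative_le q) (by omega))
        have c1 : ((k - 1 : ℕ) : ℝ) = (k : ℝ) - 1 := by
          push_cast [Nat.cast_sub (by omega : 1 ≤ k)]; ring
        have c2 : ((k - 2 : ℕ) : ℝ) = (k : ℝ) - 2 := by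
          push_cast [Nat.cast_sub (by omega : 2 ≤ k)]; ring
        rw [c1] at IH1
        rw [c2] at IH2
        have hb : 0 ≤ Jg (derivative q ^ 2) := Jg_sq_nonneg _
        have ha' : 0 ≤ Jg (q ^ 2) := Jg_sq_nonneg _
        have hkt : 0 ≤ (k : ℝ) * (c ^ 2 * Jg 1) := mul_nonneg (by positivity) ht
        rw [hDP, hP2]
        nlinarith [IH1, IH2, hb, ha', hkt]

theorem bernstein_gaussian (k : ℕ) (hk : 1 ≤ k) (p : Polynomial ℝ) (hp : p.natDegree ≤ k) :
    (∫ y, (Polynomial.derivative p).eval y ^ 2 * gauss y) ≤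
      (k : ℝ) * ∫ y, p.eval y ^ 2 * gauss y := by
  have h := bernstein_main k p hp
  simp only [Jg, Polynomial.eval_pow] at h
  exact h
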